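/- Let G be a graph and let S = {M_1, ..., M_k} be an (m,s)-snake in G: the M_i are disjoint m-element vertex sets, each inducing a clique in G, and the auxiliary graph on {M_1,...,M_k} joining M and M' whenever the bipartite graph G[M, M'] contains a complete bipartite K_{s,s} is connected. Let Q be a subgraph of the hypercube Q_n, and for each vertex x of Q let D_x be a set of at most Δ vertices of ∪_i M_i. If m ≥ v(Q)/k + s + Δ and s ≥ 2Δ + 8k·C(n, ⌊n/2⌋), then there is an embedding φ of Q into the induced subgraph G[∪_i M_i] with φ(x) ∉ D_x for every vertex x of Q. -/

import Mathlib

def cubeGraph (n : ℕ) : SimpleGraph (Fin n → Bool) where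
  Adj x y := (Finset.univ.filter fun i => x i ≠ y i).card = 1
  symm := by
    constructor
    intro x y hxy
    beta_reduce at hxy ⊢
    have h : (Finset.univ.filter fun i => y i ≠ x i)
        = Finset.univ.filter fun i => x i ≠ y i := by
      apply Finset.filter_congr
      intro i _
      simp [ne_comm]
    rw [h]; exact hxy
  loopless := by
    constructor
    intro x hx
    simp at hx
/-- `K_{s,s} ⊆ G[M,M']`. -/
def hasKss {V : Type*} [DecidableEq V] (G : SimpleGraph V) (s : ℕ)
    (M M' : Finset V) : Prop :=
  ∃ X Y : Finset V, X ⊆ M ∧ Y ⊆ M' ∧ X.card = s ∧ Y.card = s ∧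
    ∀ x ∈ X, ∀ y ∈ Y, G.Adj x y

/-!
Order the vertices of `Q` by Hamming weight. Cube edges join consecutive weight layers and each
layer has at most `C = C(n, ⌊n/2⌋)` vertices, so in this order every edge of `Q` spans fewer than
`t = 2C` positions: `Q` is a subgraph of the `(t-1)`-st power of a path.

A closed walk `W₀ W₁ … W_len` in the auxiliary graph visits every clique and has `len < 2k - 1`.
Cut the positions into consecutive segments, one per step `j` of the walk, all placed in the clique
`W_j`: the first `t` positions go into the `K_{s,s}` shared with `W_{j-1}`, the last `t` into the
one shared with `W_{j+1}`, and at one chosen visit of each clique a dump of `r = ⌈v(Q)/k⌉` further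
positions lies in between. An edge of the path power then either stays in one clique or
crosses a `K_{s,s}`. Vertices are picked greedily, connector positions first: a connector position
competes with fewer than `4kt ≤ s - Δ` other connector positions, and any other position in addition
with at most `r - 1` positions of its own clique, which the bound `m ≥ r + s + Δ` accommodates.
-/

open Finset

theorem Finset.exists_injOn_mem_of_card_conflicts_lt {ι β V : Type*} [LinearOrder β] [DecidableEq V]
    [Nonempty V] (A : Finset ι) (π : ι → β) (hπ : Set.InjOn π A) (P F : ι → Finset V)
    (hA : ∀ a ∈ A, #{b ∈ A | π b < π a ∧ ¬Disjoint (P a) (P b)} + #(F a) < #(P a)) :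
    ∃ ψ : ι → V, Set.InjOn ψ A ∧ ∀ a ∈ A, ψ a ∈ P a ∧ ψ a ∉ F a := by
  classical
  induction A using Finset.induction_on_max_value π with
  | empty => exact ⟨fun _ => Classical.arbitrary V, by simp, by simp⟩
  | insert a A ha hmax ih =>
    have hlt : ∀ b ∈ A, π b < π a := fun b hb =>
      (hmax b hb).lt_of_ne fun h => ha (hπ (by simp [hb]) (by simp) h ▸ hb)
    obtain ⟨ψ, hψinj, hψ⟩ := ih (hπ.mono (by simp)) fun b hb =>
      (Nat.add_le_add_right (card_le_card (filter_subset_filter _ (subset_insert a A))) _).trans_lt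
        (hA b (mem_insert_of_mem hb))
    set C := {b ∈ A | ¬Disjoint (P a) (P b)}
    have hC : #(F a ∪ C.image ψ) < #(P a) := by
      have : C ⊆ {b ∈ insert a A | π b < π a ∧ ¬Disjoint (P a) (P b)} := fun b hb => by
        simp only [C, mem_filter] at hb ⊢
        exact ⟨mem_insert_of_mem hb.1, hlt b hb.1, hb.2⟩
      calc #(F a ∪ C.image ψ) ≤ #(F a) + #C :=
            (card_union_le _ _).trans (by gcongr; exact card_image_le)
        _ ≤ _ := by rw [add_comm]; gcongr
        _ < #(P a) := hA a (mem_insert_self a A)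
    obtain ⟨v, hvP, hv⟩ := exists_mem_notMem_of_card_lt_card hC
    have hvψ : ∀ b ∈ A, v ≠ ψ b := by
      rintro b hb rfl
      by_cases hd : Disjoint (P a) (P b)
      · exact disjoint_left.mp hd hvP (hψ b hb).1
      · exact hv (mem_union_right _ (mem_image_of_mem ψ (mem_filter.mpr ⟨hb, hd⟩)))
    have hEq : Set.EqOn ψ (Function.update ψ a v) A := fun b hb => by
      rw [Function.update_of_ne (ne_of_mem_of_not_mem hb ha)]
    refine ⟨Function.update ψ a v, ?_, ?_⟩
    · rw [coe_insert, Set.injOn_insert (by simpa using ha), ← hEq.image_eq]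
      refine ⟨hψinj.congr hEq, ?_⟩
      simp only [Function.update_self, Set.mem_image, mem_coe, not_exists, not_and]
      exact fun b hb h => hvψ b hb h.symm
    · intro b hb
      rcases mem_insert.mp hb with rfl | hb
      · simpa using ⟨hvP, fun h => hv (mem_union_left _ h)⟩
      · rw [← hEq hb]; exact hψ b hb

namespace SimpleGraph

variable {V : Type*} {G : SimpleGraph V} [Fintype V]

theorem Connected.exists_closed_walk_covering_of_length_le [DecidableEq V] (hG : G.Connected)
    {u : V} (w : G.Walk u u)
    (hw : w.length + 2 ≤ 2 * #w.support.toFinset) :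
    ∃ (v : V) (c : G.Walk v v), (∀ x, x ∈ c.support) ∧ c.length + 2 ≤ 2 * Fintype.card V := by
  induction hd : Fintype.card V - #w.support.toFinset generalizing u with
  | zero =>
    have huniv : w.support.toFinset = univ :=
      eq_univ_of_card _ (le_antisymm (card_le_univ _) (by omega))
    exact ⟨u, w, fun x => List.mem_toFinset.mp (huniv ▸ mem_univ x), by rwa [← card_univ, ← huniv]⟩
  | succ d ih =>
    obtain ⟨y₀, hy₀⟩ : ∃ y, y ∉ w.support := by
      by_contra! h
      have : w.support.toFinset = univ := eq_univ_of_forall fun x => by simpa using h x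
      rw [this, card_univ] at hd
      omega
    obtain ⟨⟨⟨x, y⟩, hxy⟩, -, hx, hy⟩ :=
      ((hG u y₀).some).exists_boundary_dart {x | x ∈ w.support} w.start_mem_support hy₀
    change x ∈ w.support at hx
    change y ∉ w.support at hy
    let c : G.Walk x x := .cons hxy (.cons hxy.symm (w.rotate x hx))
    have hc : c.support.toFinset = insert y w.support.toFinset := by
      ext z
      simp only [c, Walk.support_cons, List.toFinset_cons, Walk.mem_support_rotate_iff, mem_insert,
        List.mem_toFinset]
      constructor
      · rintro (rfl | rfl | h) <;> simp_all
      · rintro (rfl | h) <;> simp_all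
    have hcard : #c.support.toFinset = #w.support.toFinset + 1 := by
      rw [hc, card_insert_of_notMem (by simpa using hy)]
    refine ih c ?_ (by omega)
    rw [hcard]
    simp only [c, Walk.length_cons, Walk.length_rotate]
    omega

theorem Connected.exists_closed_walk_covering (hG : G.Connected) :
    ∃ (v : V) (c : G.Walk v v), (∀ x, x ∈ c.support) ∧ c.length + 2 ≤ 2 * Fintype.card V := by
  classical
  obtain ⟨u⟩ := hG.nonempty
  exact hG.exists_closed_walk_covering_of_length_le (Walk.nil : G.Walk u u) (by simp)

end SimpleGraph

theorem Finset.exists_rank_of_card_level_le {α : Type*} (S : Finset α) (ℓ : α → ℕ) (c : ℕ)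
    (hc : ∀ w, #{x ∈ S | ℓ x = w} ≤ c) :
    ∃ pos : α → ℕ, Set.InjOn pos S ∧ (∀ x ∈ S, pos x < #S) ∧
      ∀ x ∈ S, ∀ y ∈ S, ℓ y = ℓ x + 1 → pos x < pos y ∧ pos y < pos x + 2 * c := by
  classical
  obtain ⟨e, he⟩ := Set.countable_iff_exists_injOn.mp S.countable_toSet
  let κ : α → ℕ ×ₗ ℕ := fun x => toLex (ℓ x, e x)
  have hκ : Set.InjOn κ S := fun x hx y hy h => he hx hy (Prod.ext_iff.mp (toLex.injective h)).2
  let pos : α → ℕ := fun x => #{y ∈ S | κ y < κ x}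
  have hpos_lt : ∀ x ∈ S, ∀ y, κ x < κ y → pos x < pos y := fun x hx y hxy =>
    card_lt_card ⟨monotone_filter_right _ fun z _ hz => hz.trans hxy,
      not_subset.mpr ⟨x, by simp [hx, hxy], by simp⟩⟩
  refine ⟨pos, fun x hx y hy h => ?_, fun x hx => ?_, fun x hx y hy hxy => ⟨?_, ?_⟩⟩
  · by_contra hne
    rcases lt_or_gt_of_ne (hκ.ne hx hy hne) with hlt | hlt
    · exact (hpos_lt x hx y hlt).ne h
    · exact (hpos_lt y hy x hlt).ne' h
  · exact card_lt_card ⟨filter_subset _ _, not_subset.mpr ⟨x, hx, by simp⟩⟩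
  · exact hpos_lt x hx y (Prod.Lex.toLex_lt_toLex.mpr (.inl (by omega)))
  · have hy' : y ∈ ({z ∈ S | ℓ z = ℓ y} : Finset α) := mem_filter.mpr ⟨hy, rfl⟩
    have hsub : ({z ∈ S | κ z < κ y} : Finset α) ⊆
        {z ∈ S | κ z < κ x} ∪ ({z ∈ S | ℓ z = ℓ x} ∪ {z ∈ S | ℓ z = ℓ y}.erase y) := by
      intro z hz
      simp only [mem_filter, mem_union, mem_erase, κ, Prod.Lex.toLex_lt_toLex] at hz ⊢
      by_contra! h
      obtain ⟨hzS, hzy | ⟨hzy, hez⟩⟩ := hz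
      · exact h.2.1 hzS (by have := (h.1 hzS).1; omega)
      · exact h.2.2 (by rintro rfl; exact hez.false) hzS hzy
    have hy_level : #({z ∈ S | ℓ z = ℓ y}.erase y) + 1 ≤ c := by
      rw [card_erase_add_one hy']; exact hc _
    have h₁ := (card_le_card hsub).trans (card_union_le _ _)
    have h₂ := card_union_le {z ∈ S | ℓ z = ℓ x} ({z ∈ S | ℓ z = ℓ y}.erase y)
    have h₃ := hc (ℓ x)
    change pos y ≤ pos x + _ at h₁
    omega

def cubeWeight {n : ℕ} (x : Fin n → Bool) : ℕ := #{i | x i = true}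

theorem card_cubeWeight_eq_le_choose_half (n w : ℕ) :
    #{x : Fin n → Bool | cubeWeight x = w} ≤ n.choose (n / 2) := by
  calc #{x : Fin n → Bool | cubeWeight x = w} ≤ #(powersetCard w (univ : Finset (Fin n))) :=
        card_le_card_of_injOn (fun x => ({i | x i = true} : Finset (Fin n)))
          (fun x hx => by simpa [cubeWeight] using (mem_filter.mp (mem_coe.mp hx)).2)
          fun x _ y _ h => funext fun i => by simpa using congrArg (i ∈ ·) h
    _ ≤ n.choose (n / 2) := by simpa using Nat.choose_le_middle w n

theorem cubeWeight_eq_succ_or_of_adj {n : ℕ} {x y : Fin n → Bool} (h : (cubeGraph n).Adj x y) :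
    cubeWeight y = cubeWeight x + 1 ∨ cubeWeight x = cubeWeight y + 1 := by
  obtain ⟨i, hi⟩ := card_eq_one.mp h
  have hdiff : ∀ j, x j ≠ y j ↔ j = i := fun j => by simpa using congrArg (j ∈ ·) hi
  have : (cubeWeight y : ℤ) - cubeWeight x = (y i).toNat - (x i).toNat := by
    simp only [cubeWeight, card_filter, Nat.cast_sum, ← sum_sub_distrib]
    rw [sum_eq_single i (fun j _ hj => by simp [not_not.mp (mt (hdiff j).mp hj)]) (by simp)]
    cases x i <;> cases y i <;> simp
  have hxy := (hdiff i).mpr rfl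
  cases hx : x i <;> cases hy : y i <;> simp_all <;> omega

theorem exists_nat_le_mul_of_div_add_le {N k m a : ℕ} (hk : 0 < k) (h : (N : ℝ) / k + a ≤ m) :
    ∃ r, N ≤ k * r ∧ r + a ≤ m := by
  have hk' : (0 : ℝ) < k := by exact_mod_cast hk
  have ham : a ≤ m := by
    have : (0 : ℝ) ≤ N / k := by positivity
    exact_mod_cast (by linarith : (a : ℝ) ≤ m)
  refine ⟨⌈(N : ℝ) / k⌉₊, ?_, ?_⟩
  · have := (div_le_iff₀' hk').mp (Nat.le_ceil ((N : ℝ) / k))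
    exact_mod_cast this
  · have : ⌈(N : ℝ) / k⌉₊ ≤ m - a := Nat.ceil_le.mpr (by push_cast [ham]; linarith)
    omega

namespace Schedule

variable (t : ℕ) (d : ℕ → ℕ)

-- Segment `j` occupies the positions `[start j, start (j + 1))`: an entry window of `t`
-- positions, a dump window of `d j` positions, and an exit window of `t` positions.
def start (j : ℕ) : ℕ := ∑ i ∈ range j, (2 * t + d i)

-- Searching up to `p` suffices since `j ≤ start t d j` once `0 < t`.
def seg (p : ℕ) : ℕ := Nat.findGreatest (fun j => start t d j ≤ p) p

def IsDump (p : ℕ) : Prop :=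
  start t d (seg t d p) + t ≤ p ∧ p + t < start t d (seg t d p + 1)

instance : DecidablePred (IsDump t d) := fun _ => inferInstanceAs (Decidable (_ ∧ _))

variable {t d}

theorem start_succ (j : ℕ) : start t d (j + 1) = start t d j + 2 * t + d j := by
  rw [start, sum_range_succ, ← add_assoc]; rfl

theorem start_mono : Monotone (start t d) :=
  monotone_nat_of_le_succ fun j => by rw [start_succ]; omega

theorem le_start (ht : 0 < t) (j : ℕ) : j ≤ start t d j := by
  induction j with
  | zero => exact Nat.zero_le _
  | succ j ih => rw [start_succ]; omega

theorem start_seg_le (p : ℕ) : start t d (seg t d p) ≤ p :=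
  Nat.findGreatest_spec (P := fun j => start t d j ≤ p) (Nat.zero_le p) (by simp [start])

theorem seg_eq_of_le_of_lt (ht : 0 < t) {p j : ℕ} (h₁ : start t d j ≤ p)
    (h₂ : p < start t d (j + 1)) : seg t d p = j := by
  refine le_antisymm ?_ (Nat.le_findGreatest ((le_start ht j).trans h₁) h₁)
  by_contra! h
  exact (start_mono h |>.trans (start_seg_le p)).not_gt h₂

theorem lt_start_seg_succ (ht : 0 < t) (p : ℕ) : p < start t d (seg t d p + 1) := by
  by_contra! h
  exact (Nat.le_findGreatest ((le_start ht _).trans h) h).not_gt (Nat.lt_succ_self _)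

theorem seg_mono : Monotone (seg t d) := fun _ _ hpq =>
  Nat.findGreatest_mono (fun _ h => h.trans hpq) hpq

theorem seg_lt_of_lt_start {p j : ℕ} (h : p < start t d j) : seg t d p < j := by
  by_contra! hj
  exact ((start_mono hj).trans (start_seg_le p)).not_gt h

theorem seg_succ_of_seg_ne (ht : 0 < t) {p q : ℕ} (hpq : p < q) (hqp : q < p + t)
    (hne : seg t d p ≠ seg t d q) :
    seg t d q = seg t d p + 1 ∧ start t d (seg t d p + 1) ≤ p + t ∧
      q < start t d (seg t d q) + t := by
  have hp := lt_start_seg_succ (d := d) ht p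
  have hq : start t d (seg t d p + 1) ≤ q := by
    by_contra! h
    have := seg_lt_of_lt_start h
    have := seg_mono (t := t) (d := d) hpq.le
    omega
  have hseg : seg t d q = seg t d p + 1 := seg_eq_of_le_of_lt ht hq (by rw [start_succ]; omega)
  exact ⟨hseg, by omega, by rw [hseg]; omega⟩

theorem card_filter_not_isDump_le (ht : 0 < t) (L : ℕ) :
    #{p ∈ range (start t d L) | ¬IsDump t d p} ≤ 2 * t * L := by
  have := card_le_mul_card_image_of_maps_to (f := seg t d)
    (s := {p ∈ range (start t d L) | ¬IsDump t d p}) (t := range L)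
    (fun p hp => mem_range.mpr (seg_lt_of_lt_start (mem_range.mp (mem_filter.mp hp).1)))
    (2 * t) fun j _ => by
      calc _ ≤ #(Ico (start t d j) (start t d j + t) ∪
              Ico (start t d j + t + d j) (start t d (j + 1))) := card_le_card <| by
            intro p hp
            obtain ⟨hp', rfl⟩ := mem_filter.mp hp
            have hdump := (mem_filter.mp hp').2
            simp only [IsDump, not_and, not_lt] at hdump
            have := start_seg_le (t := t) (d := d) p
            have := lt_start_seg_succ (d := d) ht p
            rw [start_succ] at *
            simp only [mem_union, mem_Ico]
            omega
        _ ≤ 2 * t := (card_union_le _ _).trans (by simp [start_succ]; omega)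
  simpa using this

theorem card_filter_isDump_seg_eq_le (S : Finset ℕ) (j : ℕ) :
    #{p ∈ S | IsDump t d p ∧ seg t d p = j} ≤ d j :=
  calc _ ≤ #(Ico (start t d j + t) (start t d j + t + d j)) := card_le_card <| by
        intro p hp
        obtain ⟨-, ⟨hdump₁, hdump⟩, rfl⟩ := mem_filter.mp hp
        rw [start_succ] at hdump
        simp only [mem_Ico]
        omega
    _ = d j := by simp

theorem d_seg_pos_of_isDump {p : ℕ} (h : IsDump t d p) : 0 < d (seg t d p) := by
  obtain ⟨h₁, h₂⟩ := h
  rw [start_succ] at h₂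
  omega

section Pool

variable {V ι : Type*} (t d) (M : ι → Finset V) (W : ℕ → ι) (E X : ℕ → Finset V)

def pool (p : ℕ) : Finset V :=
  if IsDump t d p then M (W (seg t d p))
  else if p < start t d (seg t d p) + t then E (seg t d p) else X (seg t d p)

-- Connector positions are served before every dump position, so that a connector position only
-- competes with the other connector positions.
def priority (L p : ℕ) : ℕ := if IsDump t d p then start t d L + p else p

variable {t d M W E X}

theorem pool_subset (hE : ∀ j, E j ⊆ M (W j)) (hX : ∀ j, X j ⊆ M (W j)) (p : ℕ) :
    pool t d M W E X p ⊆ M (W (seg t d p)) := by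
  unfold pool
  split_ifs
  exacts [subset_rfl, hE _, hX _]

theorem le_card_pool {s : ℕ} (hE : ∀ j, s ≤ #(E j)) (hX : ∀ j, s ≤ #(X j)) {p : ℕ}
    (hp : ¬IsDump t d p) : s ≤ #(pool t d M W E X p) := by
  unfold pool
  split_ifs
  exacts [hE _, hX _]

theorem priority_injOn (L : ℕ) : Set.InjOn (priority t d L) (range (start t d L)) := by
  intro p hp q hq h
  simp only [coe_range, Set.mem_Iio] at hp hq
  unfold priority at h
  split_ifs at h <;> omega

theorem adj_of_mem_pool {G : SimpleGraph V} (hclique : ∀ i, G.IsClique (M i : Set V))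
    (hE : ∀ j, E j ⊆ M (W j)) (hX : ∀ j, X j ⊆ M (W j)) {len : ℕ}
    (hXE : ∀ j < len, ∀ u ∈ X j, ∀ v ∈ E (j + 1), G.Adj u v) (ht : 0 < t) {p q : ℕ}
    (hpq : p < q) (hqp : q < p + t) (hq : q < start t d (len + 1)) {u v : V}
    (hu : u ∈ pool t d M W E X p) (hv : v ∈ pool t d M W E X q) (huv : u ≠ v) : G.Adj u v := by
  by_cases hseg : seg t d p = seg t d q
  · exact hclique _ (pool_subset hE hX p hu) (hseg ▸ pool_subset hE hX q hv) huv
  obtain ⟨hsucc, hp_exit, hq_entry⟩ := seg_succ_of_seg_ne ht hpq hqp hseg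
  have hlen : seg t d p < len := by have := seg_lt_of_lt_start hq; omega
  have hpX : pool t d M W E X p = X (seg t d p) := by
    have hnd : ¬IsDump t d p := fun h => by have := h.2; omega
    have := start_succ (t := t) (d := d) (seg t d p)
    rw [pool, if_neg hnd, if_neg (by omega)]
  have hqE : pool t d M W E X q = E (seg t d p + 1) := by
    have hnd : ¬IsDump t d q := fun h => by have := h.1; omega
    rw [pool, if_neg hnd, if_pos hq_entry, hsucc]
  exact hXE _ hlen u (hpX ▸ hu) v (hqE ▸ hv)

variable (t d M W E X) in
def conflicts [DecidableEq V] (L p : ℕ) : Finset ℕ :=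
  {q ∈ range (start t d L) | priority t d L q < priority t d L p ∧
    ¬Disjoint (pool t d M W E X p) (pool t d M W E X q)}

theorem card_conflicts_lt_of_not_isDump [DecidableEq V] (ht : 0 < t) {L p : ℕ}
    (hp : p < start t d L) (hpd : ¬IsDump t d p) :
    #(conflicts t d M W E X L p) < 2 * t * L := by
  have hpR : p ∈ range (start t d L) := mem_range.mpr hp
  have hsub : conflicts t d M W E X L p ⊆ {q ∈ range (start t d L) | ¬IsDump t d q}.erase p := by
    intro q hq
    obtain ⟨hqR, hqp, -⟩ := mem_filter.mp hq
    refine mem_erase.mpr ⟨by rintro rfl; exact hqp.false, mem_filter.mpr ⟨hqR, fun hqd => ?_⟩⟩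
    simp only [priority, if_pos hqd, if_neg hpd] at hqp
    omega
  have := card_le_card hsub
  rw [card_erase_of_mem (mem_filter.mpr ⟨hpR, hpd⟩)] at this
  have : 0 < #{q ∈ range (start t d L) | ¬IsDump t d q} :=
    card_pos.mpr ⟨p, mem_filter.mpr ⟨hpR, hpd⟩⟩
  have := card_filter_not_isDump_le (d := d) ht L
  omega

theorem card_conflicts_lt_of_isDump [DecidableEq V]
    (hdisj : ∀ i j, i ≠ j → Disjoint (M i) (M j)) (hE : ∀ j, E j ⊆ M (W j))
    (hX : ∀ j, X j ⊆ M (W j)) {r : ℕ} (hd : ∀ j, d j ≤ r)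
    (hdW : ∀ j j', 0 < d j → 0 < d j' → W j = W j' → j = j') (ht : 0 < t) {L p : ℕ}
    (hp : p < start t d L) (hpd : IsDump t d p) :
    #(conflicts t d M W E X L p) < 2 * t * L + r := by
  have hsub : conflicts t d M W E X L p ⊆ {q ∈ range (start t d L) | ¬IsDump t d q} ∪
      {q ∈ range (start t d L) | IsDump t d q ∧ seg t d q = seg t d p}.erase p := by
    intro q hq
    obtain ⟨hqR, hqp, hpq⟩ := mem_filter.mp hq
    by_cases hqd : IsDump t d q
    · refine mem_union_right _ (mem_erase.mpr ⟨by rintro rfl; exact hqp.false, ?_⟩)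
      refine mem_filter.mpr
        ⟨hqR, hqd, hdW _ _ (d_seg_pos_of_isDump hqd) (d_seg_pos_of_isDump hpd) ?_⟩
      by_contra hW
      exact hpq ((hdisj _ _ (Ne.symm hW)).mono (pool_subset hE hX p) (pool_subset hE hX q))
    · exact mem_union_left _ (mem_filter.mpr ⟨hqR, hqd⟩)
  have hdump := card_filter_isDump_seg_eq_le (t := t) (d := d) (range (start t d L)) (seg t d p)
  have hdump' := card_erase_of_mem
    (s := {q ∈ range (start t d L) | IsDump t d q ∧ seg t d q = seg t d p})
    (mem_filter.mpr ⟨mem_range.mpr hp, hpd, rfl⟩)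
  have := (card_le_card hsub).trans (card_union_le _ _)
  have := card_filter_not_isDump_le (d := d) ht L
  have := hd (seg t d p)
  have := d_seg_pos_of_isDump hpd
  omega

theorem card_conflicts_add_lt_card_pool [DecidableEq V]
    (hdisj : ∀ i j, i ≠ j → Disjoint (M i) (M j)) (hE : ∀ j, E j ⊆ M (W j))
    (hX : ∀ j, X j ⊆ M (W j)) {s r Δ L : ℕ}
    (hEs : ∀ j, s ≤ #(E j)) (hXs : ∀ j, s ≤ #(X j)) (hM : ∀ i, r + s ≤ #(M i))
    (hd : ∀ j, d j ≤ r) (hdW : ∀ j j', 0 < d j → 0 < d j' → W j = W j' → j = j')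
    (ht : 0 < t) (hs : 2 * t * L + Δ ≤ s) {p : ℕ} (hp : p < start t d L) :
    #(conflicts t d M W E X L p) + Δ < #(pool t d M W E X p) := by
  by_cases hpd : IsDump t d p
  · have := card_conflicts_lt_of_isDump hdisj hE hX hd hdW ht hp hpd
    have := hM (W (seg t d p))
    rw [pool, if_pos hpd]
    omega
  · have := card_conflicts_lt_of_not_isDump (M := M) (W := W) (E := E) (X := X) ht hp hpd
    have := le_card_pool (M := M) (W := W) hEs hXs hpd
    omega

end Pool

end Schedule

theorem hasKss_comm {V : Type*} [DecidableEq V] {G : SimpleGraph V} {s : ℕ} {A B : Finset V}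
    (h : hasKss G s A B) : hasKss G s B A :=
  let ⟨X, Y, hX, hY, hXc, hYc, hXY⟩ := h
  ⟨Y, X, hY, hX, hYc, hXc, fun y hy x hx => (hXY x hx y hy).symm⟩

theorem exists_walk_connectors {V ι : Type*} [DecidableEq V] [Fintype ι]
    (G : SimpleGraph V) (M : ι → Finset V) {s : ℕ} (hM : ∀ i, s ≤ #(M i))
    (hconn : (SimpleGraph.fromRel fun i j => hasKss G s (M i) (M j)).Connected) :
    ∃ (len : ℕ) (W : ℕ → ι) (E X : ℕ → Finset V), len + 2 ≤ 2 * Fintype.card ι ∧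
      (∀ i, ∃ j ≤ len, W j = i) ∧ (∀ j, E j ⊆ M (W j) ∧ s ≤ #(E j)) ∧
      (∀ j, X j ⊆ M (W j) ∧ s ≤ #(X j)) ∧ ∀ j < len, ∀ u ∈ X j, ∀ v ∈ E (j + 1), G.Adj u v := by
  obtain ⟨v, c, hc, hlen⟩ := hconn.exists_closed_walk_covering
  -- The windows at the two ends of the walk have no neighbouring step: they use the whole clique.
  have hstep : ∀ j, ∃ X Y : Finset V, X ⊆ M (c.getVert j) ∧ Y ⊆ M (c.getVert (j + 1)) ∧
      s ≤ #X ∧ s ≤ #Y ∧ (j < c.length → ∀ u ∈ X, ∀ v ∈ Y, G.Adj u v) := by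
    intro j
    by_cases hj : j < c.length
    · obtain ⟨-, h⟩ := (SimpleGraph.fromRel_adj _ _ _).mp (c.adj_getVert_succ hj)
      obtain ⟨X, Y, hX, hY, hXc, hYc, hXY⟩ := h.elim id hasKss_comm
      exact ⟨X, Y, hX, hY, hXc.ge, hYc.ge, fun _ => hXY⟩
    · exact ⟨_, _, subset_rfl, subset_rfl, hM _, hM _, (absurd · hj)⟩
  choose X Y hX hY hXs hYs hXY using hstep
  refine ⟨c.length, c.getVert, fun j => if j = 0 then M (c.getVert 0) else Y (j - 1), X, hlen,
    fun i => ?_, fun j => ?_, fun j => ⟨hX j, hXs j⟩, fun j hj => by simpa using hXY j hj⟩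
  · obtain ⟨j, hj, hjl⟩ := SimpleGraph.Walk.mem_support_iff_exists_getVert.mp (hc i)
    exact ⟨j, hjl, hj⟩
  · rcases j with _ | j
    · simp [hM]
    · simpa using ⟨hY j, hYs j⟩

theorem exists_dump_sizes {ι : Type*} [Fintype ι] {W : ℕ → ι} {len : ℕ}
    (hcover : ∀ i, ∃ j ≤ len, W j = i) (r : ℕ) :
    ∃ d : ℕ → ℕ, (∀ j, d j ≤ r) ∧ (∀ j j', 0 < d j → 0 < d j' → W j = W j' → j = j') ∧
      Fintype.card ι * r ≤ ∑ j ∈ range (len + 1), d j := by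
  classical
  choose σ hσ hWσ using hcover
  have hσinj : Function.Injective σ := fun i i' h => by rw [← hWσ i, ← hWσ i', h]
  refine ⟨fun j => if j ∈ univ.image σ then r else 0, fun j => by dsimp only; split_ifs <;> omega,
    fun j j' hj hj' h => ?_, ?_⟩
  · obtain ⟨⟨i, rfl⟩, -⟩ : (∃ i, σ i = j) ∧ _ := by simpa [pos_iff_ne_zero] using hj
    obtain ⟨⟨i', rfl⟩, -⟩ : (∃ i', σ i' = j') ∧ _ := by simpa [pos_iff_ne_zero] using hj'
    rw [hWσ, hWσ] at h
    rw [h]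
  · calc Fintype.card ι * r = ∑ j ∈ univ.image σ, if j ∈ univ.image σ then r else 0 := by
          rw [sum_congr rfl fun j hj => if_pos hj, sum_const, card_image_of_injective _ hσinj,
            card_univ, smul_eq_mul]
      _ ≤ ∑ j ∈ range (len + 1), if j ∈ univ.image σ then r else 0 :=
          sum_le_sum_of_subset fun j hj => by
            obtain ⟨i, -, rfl⟩ := mem_image.mp hj
            exact mem_range.mpr (Nat.lt_succ_of_le (hσ i))

open Schedule in
theorem exists_pathPower_embedding_of_walk {V ι : Type*} [DecidableEq V] [Fintype ι]
    {G : SimpleGraph V} {M : ι → Finset V} (hdisj : ∀ i j, i ≠ j → Disjoint (M i) (M j))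
    (hclique : ∀ i, G.IsClique (M i : Set V)) {len : ℕ} {W : ℕ → ι} {E X : ℕ → Finset V}
    {s r t Δ N : ℕ} (hcover : ∀ i, ∃ j ≤ len, W j = i) (hE : ∀ j, E j ⊆ M (W j) ∧ s ≤ #(E j))
    (hX : ∀ j, X j ⊆ M (W j) ∧ s ≤ #(X j))
    (hXE : ∀ j < len, ∀ u ∈ X j, ∀ v ∈ E (j + 1), G.Adj u v) (hM : ∀ i, r + s ≤ #(M i))
    (ht : 0 < t) (hN : N ≤ Fintype.card ι * r) (hs : 2 * t * (len + 1) + Δ ≤ s)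
    (F : ℕ → Finset V) (hF : ∀ p, #(F p) ≤ Δ) :
    ∃ ψ : ℕ → V, Set.InjOn ψ (range N) ∧ (∀ p < N, ψ p ∈ univ.biUnion M ∧ ψ p ∉ F p) ∧
      ∀ p q, p < q → q < p + t → q < N → G.Adj (ψ p) (ψ q) := by
  obtain ⟨d, hdr, hdW, hcap⟩ := exists_dump_sizes hcover r
  have hNB : N ≤ start t d (len + 1) :=
    hN.trans (hcap.trans (sum_le_sum fun j _ => Nat.le_add_left _ _))
  have : Nonempty V := by
    have : 0 < 2 * t * (len + 1) := by positivity
    exact ⟨(card_pos.mp ((by omega : 0 < s).trans_le (hE 0).2)).choose⟩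
  obtain ⟨ψ, hψinj, hψ⟩ := (range (start t d (len + 1))).exists_injOn_mem_of_card_conflicts_lt
    (priority t d (len + 1)) (priority_injOn _) (pool t d M W E X) F fun p hp =>
      (Nat.add_le_add_left (hF p) _).trans_lt <| card_conflicts_add_lt_card_pool hdisj
        (fun j => (hE j).1) (fun j => (hX j).1) (fun j => (hE j).2) (fun j => (hX j).2) hM hdr
        hdW ht hs (mem_range.mp hp)
  have hψ' : ∀ p < N, ψ p ∈ pool t d M W E X p ∧ ψ p ∉ F p := fun p hp =>
    hψ p (mem_range.mpr (hp.trans_le hNB))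
  refine ⟨ψ, hψinj.mono (by simpa using hNB), fun p hp => ⟨?_, (hψ' p hp).2⟩,
    fun p q hpq hqp hq => ?_⟩
  · exact mem_biUnion.mpr ⟨_, mem_univ _, pool_subset (fun j => (hE j).1) (fun j => (hX j).1) p
      (hψ' p hp).1⟩
  · refine adj_of_mem_pool hclique (fun j => (hE j).1) (fun j => (hX j).1) hXE ht hpq hqp
      (hq.trans_le hNB) (hψ' p (hpq.trans hq)).1 (hψ' q hq).1 ?_
    exact (hψinj.ne_iff (by simpa using (hpq.trans hq).trans_le hNB)
      (by simpa using hq.trans_le hNB)).mpr hpq.ne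

theorem exists_pathPower_embedding {V ι : Type*} [DecidableEq V] [Fintype ι]
    {G : SimpleGraph V} {M : ι → Finset V} {s r t Δ N : ℕ}
    (hdisj : ∀ i j, i ≠ j → Disjoint (M i) (M j)) (hclique : ∀ i, G.IsClique (M i : Set V))
    (hconn : (SimpleGraph.fromRel fun i j => hasKss G s (M i) (M j)).Connected)
    (hM : ∀ i, r + s ≤ #(M i)) (ht : 0 < t) (hN : N ≤ Fintype.card ι * r)
    (hs : 4 * Fintype.card ι * t + Δ ≤ s) (F : ℕ → Finset V) (hF : ∀ p, #(F p) ≤ Δ) :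
    ∃ ψ : ℕ → V, Set.InjOn ψ (range N) ∧ (∀ p < N, ψ p ∈ univ.biUnion M ∧ ψ p ∉ F p) ∧
      ∀ p q, p < q → q < p + t → q < N → G.Adj (ψ p) (ψ q) := by
  obtain ⟨len, W, E, X, hlen, hcover, hE, hX, hXE⟩ :=
    exists_walk_connectors G M (fun i => (Nat.le_add_left s r).trans (hM i)) hconn
  exact exists_pathPower_embedding_of_walk hdisj hclique hcover hE hX hXE hM ht hN
    (by nlinarith) F hF

theorem stmt14_general {V : Type*} [DecidableEq V] (G : SimpleGraph V)
    (n k m s Δ : ℕ) (M : Fin k → Finset V)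
    (hdisj : ∀ i j, i ≠ j → Disjoint (M i) (M j))
    (hcard : ∀ i, (M i).card = m)
    (hclique : ∀ i, G.IsClique (M i : Set V))
    (hconn : (SimpleGraph.fromRel fun i j : Fin k => hasKss G s (M i) (M j)).Connected)
    (sQ : Finset (Fin n → Bool)) (Q : SimpleGraph (Fin n → Bool))
    (hQ : Q ≤ cubeGraph n) (hQs : ∀ x y, Q.Adj x y → x ∈ sQ ∧ y ∈ sQ)
    (D : (Fin n → Bool) → Finset V)
    (hDcard : ∀ x, (D x).card ≤ Δ)
    (hm : (sQ.card : ℝ) / k + s + Δ ≤ m)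
    (hs : 2 * Δ + 8 * k * Nat.choose n (n / 2) ≤ s) :
    ∃ φ : (Fin n → Bool) → V,
      (∀ x ∈ sQ, ∀ y ∈ sQ, φ x = φ y → x = y) ∧
      (∀ x ∈ sQ, φ x ∈ Finset.univ.biUnion fun i => M i) ∧
      (∀ x ∈ sQ, φ x ∉ D x) ∧
      (∀ x y, Q.Adj x y → G.Adj (φ x) (φ y)) := by
  have hk : 0 < k := Fin.pos_iff_nonempty.mpr hconn.nonempty
  obtain ⟨pos, hposinj, hposlt, hposgap⟩ := sQ.exists_rank_of_card_level_le cubeWeight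
    (n.choose (n / 2)) fun w => (card_le_card (filter_subset_filter _ (subset_univ sQ))).trans
      (card_cubeWeight_eq_le_choose_half n w)
  obtain ⟨r, hNr, hrm⟩ :=
    exists_nat_le_mul_of_div_add_le (a := s + Δ) hk (by push_cast; rwa [← add_assoc])
  obtain ⟨ψ, hψinj, hψ, hψadj⟩ := exists_pathPower_embedding (r := r) (t := 2 * n.choose (n / 2))
    (F := fun p => D (Function.invFunOn pos sQ p)) hdisj hclique hconn
    (fun i => by rw [hcard]; omega) (by have := Nat.choose_pos (Nat.div_le_self n 2); omega)
    (by simpa using hNr) (by rw [Fintype.card_fin]; linarith) fun p => hDcard _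
  refine ⟨ψ ∘ pos, fun x hx y hy h => hψinj.comp hposinj (fun z hz => ?_) hx hy h,
    fun x hx => (hψ _ (hposlt x hx)).1, fun x hx => ?_, fun x y hxy => ?_⟩
  · simpa using hposlt z hz
  · simpa [hposinj.leftInvOn_invFunOn hx] using (hψ _ (hposlt x hx)).2
  · obtain ⟨hx, hy⟩ := hQs x y hxy
    rcases cubeWeight_eq_succ_or_of_adj (hQ hxy) with h | h
    · exact hψadj _ _ (hposgap x hx y hy h).1 (hposgap x hx y hy h).2 (hposlt y hy)
    · exact (hψadj _ _ (hposgap y hy x hx h).1 (hposgap y hy x hx h).2 (hposlt x hx)).symm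

/-- Embedding a subgraph `Q` of `Q_n` into an `(m,s)`-snake
`{M_1,…,M_k}`, avoiding a forbidden set `D_x` of size at most `Δ` for each
vertex `x`, provided `m ≥ v(Q)/k + s + Δ` and `s ≥ 2Δ + 8k·C(n,⌊n/2⌋)`. -/
theorem stmt14 {V : Type*} [Fintype V] [DecidableEq V] (G : SimpleGraph V)
    (n k m s Δ : ℕ) (hk : 0 < k) (M : Fin k → Finset V)
    (hdisj : ∀ i j, i ≠ j → Disjoint (M i) (M j))
    (hcard : ∀ i, (M i).card = m)
    (hclique : ∀ i, G.IsClique (M i : Set V))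
    (hconn : (SimpleGraph.fromRel fun i j : Fin k => hasKss G s (M i) (M j)).Connected)
    (sQ : Finset (Fin n → Bool)) (Q : SimpleGraph (Fin n → Bool))
    (hQ : Q ≤ cubeGraph n) (hQs : ∀ x y, Q.Adj x y → x ∈ sQ ∧ y ∈ sQ)
    (D : (Fin n → Bool) → Finset V)
    (hD : ∀ x, D x ⊆ Finset.univ.biUnion fun i => M i)
    (hDcard : ∀ x, (D x).card ≤ Δ)
    (hm : (sQ.card : ℝ) / k + s + Δ ≤ m)
    (hs : 2 * Δ + 8 * k * Nat.choose n (n / 2) ≤ s) :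
    ∃ φ : (Fin n → Bool) → V,
      (∀ x ∈ sQ, ∀ y ∈ sQ, φ x = φ y → x = y) ∧
      (∀ x ∈ sQ, φ x ∈ Finset.univ.biUnion fun i => M i) ∧
      (∀ x ∈ sQ, φ x ∉ D x) ∧
      (∀ x y, Q.Adj x y → G.Adj (φ x) (φ y)) :=
  stmt14_general G n k m s Δ M hdisj hcard hclique hconn sQ Q hQ hQs D hDcard hm hs
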